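/- Define κ on nonempty partitions into distinct parts by: if ℓ(π) ≥ 4, κ(π)=0 when ℓ(π)-1 or ℓ(π)-2 is a part of π and κ(π)=1 otherwise; if ℓ(π) ∈ {2,3}, κ(π)=1 if π has only one part and 0 otherwise; if ℓ(π)=1, κ(π)=0; and κ(∅)=0. Then (-q;q)_∞ (1 - q² + zq²) = Σ_{π ∈ PD} z^{κ(π)} q^{|π|}. -/

import Mathlib

open Finset PowerSeries

/-- The Andrews–Garvan crank of a multiset of parts: the largest part if there
are no ones, otherwise (number of parts larger than the number of ones) minus
(number of ones). -/
def crankM (s : Multiset ℕ) : ℤ :=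
  if 1 ∈ s then
    ((s.filter fun x => Multiset.count 1 s < x).card : ℤ) - Multiset.count 1 s
  else (s.sup : ℤ)

/-- The Andrews–Garvan crank of a partition. -/
def crank {n : ℕ} (p : n.Partition) : ℤ := crankM p.parts

/-- `M(m,n)`: the number of partitions of `n` with crank `m`. -/
def crankCount (n : ℕ) (m : ℤ) : ℕ :=
  ((Finset.univ : Finset n.Partition).filter fun p => crank p = m).card

/-- The Laurent polynomial ring `ℤ[z,z⁻¹]` of the crank variable. -/
abbrev L : Type := LaurentPolynomial ℤ

/-- The crank variable `z`. -/
noncomputable def Z : L := LaurentPolynomial.T 1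

/-- `z⁻¹`. -/
noncomputable def Zi : L := LaurentPolynomial.T (-1)

/-- `κ(π)` for a partition `π` into distinct parts. -/
def kapDP {n : ℕ} (p : n.Partition) : ℕ :=
  if 4 ≤ p.parts.sup then
    (if p.parts.sup - 1 ∈ p.parts ∨ p.parts.sup - 2 ∈ p.parts then 0 else 1)
  else if p.parts.sup = 3 ∨ p.parts.sup = 2 then
    (if Multiset.card p.parts = 1 then 1 else 0)
  else 0

/-! ### Auxiliary lemmas -/

lemma msup_mem (s : Multiset ℕ) (hs : s ≠ 0) : s.sup ∈ s := by
  induction s using Multiset.induction with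
  | empty => simp at hs
  | cons a s ih =>
    rw [Multiset.sup_cons]
    rcases eq_or_ne s 0 with rfl | h
    · simp
    · rcases le_total a s.sup with h1 | h1
      · rw [sup_eq_right.mpr h1]; exact Multiset.mem_cons_of_mem (ih h)
      · rw [sup_eq_left.mpr h1]; exact Multiset.mem_cons_self a s

lemma finset_sum_id (t : Finset ℕ) : ∑ i ∈ t, i = t.val.sum := by
  rw [Finset.sum_eq_multiset_sum, Multiset.map_id']

lemma mem_distincts' {n : ℕ} (p : n.Partition) :
    p ∈ Nat.Partition.distincts n ↔ p.parts.Nodup := by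
  simp [Nat.Partition.distincts]

/-- The coefficient of `qⁿ` in the truncated product `∏ (1+qᵏ)` counts distinct partitions. -/
lemma prodCoeff (N n : ℕ) (hn : n ≤ N) :
    PowerSeries.coeff (R := L) n (∏ k ∈ Icc 1 N, (1 + (X : PowerSeries L) ^ k)) =
      ((Nat.Partition.distincts n).card : L) := by
  have h1 : (∏ k ∈ Icc 1 N, (1 + (X : PowerSeries L) ^ k)) =
      ∑ t ∈ (Icc 1 N).powerset, X ^ (∑ i ∈ t, i) := by
    simp_rw [add_comm (1 : PowerSeries L)]
    rw [Finset.prod_add]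
    refine Finset.sum_congr rfl fun t ht => ?_
    rw [Finset.prod_pow_eq_pow_sum]
    simp
  rw [h1, map_sum]
  simp_rw [coeff_X_pow]
  rw [Finset.sum_boole]
  congr 1
  apply Finset.card_bij (fun t ht => Nat.Partition.ofSums n t.val (by
    simp only [Finset.mem_filter] at ht
    rw [← finset_sum_id]; exact ht.2.symm))
  · intro t ht
    rw [mem_distincts']
    exact Multiset.Nodup.filter _ t.nodup
  · intro t1 h1 t2 h2 heq
    simp only [Finset.mem_filter, Finset.mem_powerset] at h1 h2
    have e : t1.val.filter (· ≠ 0) = t2.val.filter (· ≠ 0) := congrArg Nat.Partition.parts heq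
    have p1 : ∀ x ∈ t1.val, x ≠ 0 := fun x hx => by
      have := h1.1 hx; simp only [Finset.mem_Icc] at this; omega
    have p2 : ∀ x ∈ t2.val, x ≠ 0 := fun x hx => by
      have := h2.1 hx; simp only [Finset.mem_Icc] at this; omega
    rw [Multiset.filter_eq_self.mpr p1, Multiset.filter_eq_self.mpr p2] at e
    exact Finset.val_injective e
  · intro p hp
    rw [mem_distincts'] at hp
    refine ⟨⟨p.parts, hp⟩, ?_, ?_⟩
    · simp only [Finset.mem_filter, Finset.mem_powerset]
      constructor
      · intro x hx
        simp only [Finset.mem_mk] at hx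
        simp only [Finset.mem_Icc]
        exact ⟨p.parts_pos hx, le_trans (le_trans (Multiset.le_sum_of_mem hx) p.parts_sum.le) hn⟩
      · rw [finset_sum_id]; exact p.parts_sum.symm
    · apply Nat.Partition.ext
      show Multiset.filter _ _ = _
      exact Multiset.filter_eq_self.mpr fun x hx => Nat.pos_iff_ne_zero.mp (p.parts_pos hx)

/-- Forward map of the bijection: replace the largest part `ℓ` by `ℓ - 2`. -/
def fwd (s : Multiset ℕ) : Multiset ℕ := if s.sup ≤ 2 then 0 else (s.sup - 2) ::ₘ s.erase s.sup

/-- Backward map of the bijection: replace the largest part `m` by `m + 2`. -/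
def bwd (t : Multiset ℕ) : Multiset ℕ := if t = 0 then {2} else (t.sup + 2) ::ₘ t.erase t.sup

/-- The condition `κ(π) = 1`, as a predicate on the multiset of parts. -/
def KC (s : Multiset ℕ) : Prop :=
  (4 ≤ s.sup ∧ s.sup - 1 ∉ s ∧ s.sup - 2 ∉ s) ∨ ((s.sup = 3 ∨ s.sup = 2) ∧ Multiset.card s = 1)

lemma kap_eq_one_iff {n : ℕ} (p : n.Partition) : kapDP p = 1 ↔ KC p.parts := by
  unfold kapDP KC
  split_ifs with h1 h2 h3 h4
  · refine iff_of_false (by simp) ?_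
    rintro (⟨_, ha, hb⟩ | ⟨hc, _⟩)
    · rcases h2 with h | h
      · exact ha h
      · exact hb h
    · rcases hc with h | h <;> omega
  · exact iff_of_true rfl (Or.inl ⟨h1, (not_or.mp h2).1, (not_or.mp h2).2⟩)
  · exact iff_of_true rfl (Or.inr ⟨h3, h4⟩)
  · refine iff_of_false (by simp) ?_
    rintro (⟨h, _⟩ | ⟨_, hc⟩)
    · exact h1 h
    · exact h4 hc
  · refine iff_of_false (by simp) ?_
    rintro (⟨h, _⟩ | ⟨hc, _⟩)
    · exact h1 h
    · exact h3 hc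

lemma kap_le_one {n : ℕ} (p : n.Partition) : kapDP p ≤ 1 := by
  unfold kapDP; split_ifs <;> simp

lemma kap_zero_of_le_one {n : ℕ} (hn : n ≤ 1) (p : n.Partition) : kapDP p = 0 := by
  have hsup : p.parts.sup ≤ 1 := by
    rw [Multiset.sup_le]
    intro b hb
    calc b ≤ p.parts.sum := Multiset.le_sum_of_mem hb
    _ = n := p.parts_sum
    _ ≤ 1 := hn
  unfold kapDP
  split_ifs <;> omega

lemma fwd_spec (s : Multiset ℕ) (hnd : s.Nodup) (hpos : ∀ x ∈ s, 0 < x) (hk : KC s) :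
    (fwd s).Nodup ∧ (∀ x ∈ fwd s, 0 < x) ∧ (fwd s).sum + 2 = s.sum ∧ bwd (fwd s) = s := by
  have hl2 : 2 ≤ s.sup := by rcases hk with ⟨h, _⟩ | ⟨h | h, _⟩ <;> omega
  have hs0 : s ≠ 0 := by
    intro h; rw [h] at hl2; simp [Multiset.sup_zero] at hl2
  have hmem : s.sup ∈ s := msup_mem s hs0
  rcases hk with ⟨h4, h1, h2⟩ | ⟨h32, hcard⟩
  · -- large case
    have hne : ¬ s.sup ≤ 2 := by omega
    have hf : fwd s = (s.sup - 2) ::ₘ s.erase s.sup := by rw [fwd, if_neg hne]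
    set l := s.sup with hldef
    have hesub : ∀ x ∈ s.erase l, x ≤ l - 3 := by
      intro x hx
      have hxs : x ∈ s := Multiset.mem_of_mem_erase hx
      have hxle : x ≤ l := Multiset.le_sup hxs
      have hx1 : x ≠ l := fun h => hnd.notMem_erase (h ▸ hx)
      have hx2 : x ≠ l - 1 := fun h => h1 (h ▸ hxs)
      have hx3 : x ≠ l - 2 := fun h => h2 (h ▸ hxs)
      omega
    have hnotm : l - 2 ∉ s.erase l := fun h => h2 (Multiset.mem_of_mem_erase h)
    refine ⟨?_, ?_, ?_, ?_⟩
    · rw [hf]; exact Multiset.nodup_cons.mpr ⟨hnotm, hnd.erase l⟩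
    · rw [hf]; intro x hx
      rcases Multiset.mem_cons.mp hx with rfl | hx
      · omega
      · exact hpos x (Multiset.mem_of_mem_erase hx)
    · rw [hf, Multiset.sum_cons]
      have : l + (s.erase l).sum = s.sum := by
        conv_rhs => rw [← Multiset.cons_erase hmem]
        rw [Multiset.sum_cons]
      omega
    · rw [hf, bwd, if_neg (by simp)]
      have hsup : ((l - 2) ::ₘ s.erase l).sup = l - 2 := by
        rw [Multiset.sup_cons]
        have : (s.erase l).sup ≤ l - 2 := Multiset.sup_le.mpr fun b hb => by
          have := hesub b hb; omega
        omega
      rw [hsup]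
      have : l - 2 + 2 = l := by omega
      rw [Multiset.erase_cons_head, this]
      exact Multiset.cons_erase hmem
  · -- small case: s = {l}
    obtain ⟨a, rfl⟩ := Multiset.card_eq_one.mp hcard
    have hsup : Multiset.sup {a} = a := by simp
    rw [hsup] at h32
    rcases h32 with rfl | rfl
    · -- a = 3
      have hf : fwd {3} = {1} := by rw [fwd]; simp [Multiset.sup_singleton]
      refine ⟨by rw [hf]; simp, by rw [hf]; simp, by rw [hf]; simp, ?_⟩
      rw [hf, bwd, if_neg (by simp)]
      simp
    · -- a = 2
      have hf : fwd {2} = 0 := by rw [fwd]; simp [Multiset.sup_singleton]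
      refine ⟨by rw [hf]; simp, by rw [hf]; simp, by rw [hf]; simp, ?_⟩
      rw [hf, bwd, if_pos rfl]

lemma bwd_spec (t : Multiset ℕ) (hnd : t.Nodup) (hpos : ∀ x ∈ t, 0 < x) :
    (bwd t).Nodup ∧ (∀ x ∈ bwd t, 0 < x) ∧ (bwd t).sum = t.sum + 2 ∧ fwd (bwd t) = t ∧ KC (bwd t) := by
  rcases eq_or_ne t 0 with rfl | ht0
  · rw [bwd, if_pos rfl]
    refine ⟨by simp, by simp, by simp, by rw [fwd]; simp, ?_⟩
    right; simp [KC]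
  · rw [bwd, if_neg ht0]
    set m := t.sup with hm
    have hmem : m ∈ t := msup_mem t ht0
    have hm1 : 1 ≤ m := hpos m hmem
    have hesub : ∀ x ∈ t.erase m, x ≤ m := fun x hx =>
      Multiset.le_sup (Multiset.mem_of_mem_erase hx)
    have hsup : ((m + 2) ::ₘ t.erase m).sup = m + 2 := by
      rw [Multiset.sup_cons]
      have h1 : (t.erase m).sup ≤ m := Multiset.sup_le.mpr hesub
      have h2 : (t.erase m).sup ≤ m + 2 := by omega
      omega
    have hsum : m + (t.erase m).sum = t.sum := by
      conv_rhs => rw [← Multiset.cons_erase hmem]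
      rw [Multiset.sum_cons]
    have hnm2 : m + 2 ∉ t.erase m := fun h => by have := hesub _ h; omega
    refine ⟨Multiset.nodup_cons.mpr ⟨hnm2, hnd.erase m⟩, ?_, ?_, ?_, ?_⟩
    · intro x hx
      rcases Multiset.mem_cons.mp hx with rfl | hx
      · omega
      · exact hpos x (Multiset.mem_of_mem_erase hx)
    · rw [Multiset.sum_cons]; omega
    · rw [fwd, if_neg (by rw [hsup]; omega), hsup]
      have : m + 2 - 2 = m := by omega
      rw [this, Multiset.erase_cons_head]
      exact Multiset.cons_erase hmem
    · rcases Nat.lt_or_ge m 2 with hm2 | hm2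
      · -- m = 1, so t = {1}, bwd t = {3}
        have hm1' : m = 1 := by omega
        have he0 : t.erase m = 0 := by
          rw [Multiset.eq_zero_iff_forall_notMem]
          intro x hx
          have hx1 := hesub x hx
          have hx2 := hpos x (Multiset.mem_of_mem_erase hx)
          have hxm : x = m := by omega
          exact hnd.notMem_erase (hxm ▸ hx)
        right
        rw [he0, hm1']
        exact ⟨Or.inl (by simp), by simp⟩
      · -- m ≥ 2
        left
        rw [hsup]
        refine ⟨by omega, ?_, ?_⟩
        · intro h
          rcases Multiset.mem_cons.mp h with h | h
          · omega
          · have := hesub _ h; omega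
        · intro h
          have : m + 2 - 2 = m := by omega
          rw [this] at h
          rcases Multiset.mem_cons.mp h with h | h
          · omega
          · exact hnd.notMem_erase h

/-- The number of distinct partitions of `n` with `κ = 1` equals the number of
distinct partitions of `n - 2`. -/
lemma card_kappa (n : ℕ) (hn : 2 ≤ n) :
    ((Nat.Partition.distincts n).filter fun p => kapDP p = 1).card
      = (Nat.Partition.distincts (n - 2)).card := by
  have key : ∀ p : n.Partition, p ∈ (Nat.Partition.distincts n).filter (fun p => kapDP p = 1) →
      (fwd p.parts).Nodup ∧ (∀ x ∈ fwd p.parts, 0 < x) ∧ (fwd p.parts).sum = n - 2 ∧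
        bwd (fwd p.parts) = p.parts := by
    intro p hp
    rw [Finset.mem_filter, mem_distincts'] at hp
    obtain ⟨h1, h2, h3, h4⟩ := fwd_spec p.parts hp.1 (fun x hx => p.parts_pos hx)
      ((kap_eq_one_iff p).mp hp.2)
    exact ⟨h1, h2, by rw [p.parts_sum] at h3; omega, h4⟩
  have key2 : ∀ q : (n - 2).Partition, q ∈ Nat.Partition.distincts (n - 2) →
      (bwd q.parts).Nodup ∧ (∀ x ∈ bwd q.parts, 0 < x) ∧ (bwd q.parts).sum = n ∧
        fwd (bwd q.parts) = q.parts ∧ KC (bwd q.parts) := by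
    intro q hq
    rw [mem_distincts'] at hq
    obtain ⟨h1, h2, h3, h4, h5⟩ := bwd_spec q.parts hq (fun x hx => q.parts_pos hx)
    exact ⟨h1, h2, by rw [q.parts_sum] at h3; omega, h4, h5⟩
  refine Finset.card_bij'
    (fun p hp => ⟨fwd p.parts, fun {x} hx => (key p hp).2.1 x hx, (key p hp).2.2.1⟩)
    (fun q hq => ⟨bwd q.parts, fun {x} hx => (key2 q hq).2.1 x hx, (key2 q hq).2.2.1⟩)
    ?_ ?_ ?_ ?_
  · intro p hp
    rw [mem_distincts']
    exact (key p hp).1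
  · intro q hq
    rw [Finset.mem_filter, mem_distincts']
    exact ⟨(key2 q hq).1, (kap_eq_one_iff _).mpr (key2 q hq).2.2.2.2⟩
  · intro p hp
    apply Nat.Partition.ext
    exact (key p hp).2.2.2
  · intro q hq
    apply Nat.Partition.ext
    exact (key2 q hq).2.2.2.1

set_option maxHeartbeats 2000000 in
/-- `(-q;q)∞ (1 - q² + zq²) = Σ_{π ∈ PD} z^{κ(π)} q^{|π|}`: the coefficient of
`qⁿ` of the left side (with the product truncated at any `N ≥ n`) is the sum of
`z^{κ(π)}` over partitions `π` of `n` into distinct parts. -/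
theorem dist_times_quadratic_eq_kappa_sum :
    ∀ N n : ℕ, n ≤ N →
      PowerSeries.coeff (R := L) n
        ((∏ k ∈ Icc 1 N, (1 + (X : PowerSeries L) ^ k)) * (1 - X ^ 2 + C (R := L) Z * X ^ 2)) =
      ∑ p ∈ Nat.Partition.distincts n, Z ^ kapDP p := by
  intro N n hn
  have hB : (1 - X ^ 2 + C (R := L) Z * X ^ 2 : PowerSeries L) = 1 + (C (R := L) (Z - 1)) * X ^ 2 := by
    rw [map_sub, map_one]; ring
  rw [hB, mul_add, mul_one, map_add]
  rw [prodCoeff N n hn]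
  have hcomm : (∏ k ∈ Icc 1 N, (1 + (X : PowerSeries L) ^ k)) * (C (R := L) (Z - 1) * X ^ 2)
      = C (R := L) (Z - 1) * ((∏ k ∈ Icc 1 N, (1 + (X : PowerSeries L) ^ k)) * X ^ 2) := by ring
  rw [hcomm, coeff_C_mul, coeff_mul_X_pow']
  -- RHS: split the sum according to κ = 1 or κ = 0
  have hsplit : (∑ p ∈ Nat.Partition.distincts n, Z ^ kapDP p) =
      ((((Nat.Partition.distincts n).filter fun p => kapDP p = 1).card : L) * Z)
      + ((((Nat.Partition.distincts n).filter fun p => ¬ kapDP p = 1).card : L)) := by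
    rw [← Finset.sum_filter_add_sum_filter_not (Nat.Partition.distincts n)
      (fun p => kapDP p = 1)]
    congr 1
    · rw [Finset.sum_congr rfl fun p hp => ?_, Finset.sum_const, nsmul_eq_mul]
      rw [(Finset.mem_filter.mp hp).2, pow_one]
    · rw [Finset.sum_congr rfl fun p hp => ?_, Finset.sum_const, nsmul_eq_mul, mul_one]
      have h1 := (Finset.mem_filter.mp hp).2
      have h2 := kap_le_one p
      have : kapDP p = 0 := by omega
      rw [this, pow_zero]
  rw [hsplit]
  have hcards : ((Nat.Partition.distincts n).filter fun p => kapDP p = 1).card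
      + ((Nat.Partition.distincts n).filter fun p => ¬ kapDP p = 1).card
      = (Nat.Partition.distincts n).card :=
    Finset.card_filter_add_card_filter_not _
  by_cases h2n : 2 ≤ n
  · rw [if_pos h2n, prodCoeff N (n - 2) (le_trans (by omega) hn), ← card_kappa n h2n]
    set a := ((Nat.Partition.distincts n).filter fun p => kapDP p = 1).card
    set b := ((Nat.Partition.distincts n).filter fun p => ¬ kapDP p = 1).card
    rw [← hcards]
    push_cast
    ring
  · rw [if_neg h2n, mul_zero, add_zero]
    have hempty : ((Nat.Partition.distincts n).filter fun p => kapDP p = 1) = ∅ := by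
      rw [Finset.filter_eq_empty_iff]
      intro p _
      rw [kap_zero_of_le_one (by omega) p]
      simp
    rw [hempty]
    simp only [Finset.card_empty, Nat.cast_zero, zero_mul, zero_add]
    rw [Finset.filter_true_of_mem fun p _ => ?_]
    · rw [kap_zero_of_le_one (by omega) p]; simp
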